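/- Let n ≥ 3, α ∈ ℝ, and let f ∈ C_0^∞(ℝⁿ\{0}) be complex-valued. Then, with Rf the Euclidean radial derivative, the cross-term computation holds: 2α · Re ∫_{ℝⁿ} R(f/‖x‖^α)(x) · conj(f(x))/‖x‖^{α+1} dx = −α(n−2) ∫_{ℝⁿ} |f(x)|²/‖x‖^{2(α+1)} dx, where R(f/‖x‖^α)(x) denotes the radial derivative of the function x ↦ f(x)/‖x‖^α. -/

import Mathlib

open MeasureTheory Real Complex
open Metric Filter Topology

theorem aux_hasFDerivAt_norm_rpow {E : Type*} [NormedAddCommGroup E] [InnerProductSpace ℝ E]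
    {x : E} (hx : x ≠ 0) (γ : ℝ) :
    HasFDerivAt (fun y : E ↦ ‖y‖ ^ γ) ((γ * ‖x‖ ^ (γ - 2)) • innerSL ℝ x) x := by
  apply HasStrictFDerivAt.hasFDerivAt
  convert (hasStrictFDerivAt_norm_sq x).rpow_const (p := γ / 2) (by simp [hx]) using 0
  simp_rw [← Real.rpow_natCast_mul (norm_nonneg _), ← Nat.cast_smul_eq_nsmul ℝ, smul_smul]
  ring_nf

theorem aux_clm_sum {n : ℕ} (L : EuclideanSpace ℝ (Fin n) →L[ℝ] ℝ) (x : EuclideanSpace ℝ (Fin n)) :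
    ∑ i, L (EuclideanSpace.single i 1) * x i = L x := by
  have h := (EuclideanSpace.basisFun (Fin n) ℝ).sum_repr x
  simp only [EuclideanSpace.basisFun_apply, EuclideanSpace.basisFun_repr] at h
  calc ∑ i, L (EuclideanSpace.single i 1) * x i
      = ∑ i, L (x i • EuclideanSpace.single i 1) := by
        simp [L.map_smul, mul_comm]
    _ = L (∑ i, x i • EuclideanSpace.single i 1) := (map_sum L _ _).symm
    _ = L x := by rw [h]

theorem aux_integrable {n : ℕ} {V : Type*} [NormedAddCommGroup V] [NormedSpace ℝ V]
    {K : Set (EuclideanSpace ℝ (Fin n))} (hKc : IsCompact K) {ε : ℝ} (hε : 0 < ε)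
    (hball : Metric.ball (0 : EuclideanSpace ℝ (Fin n)) ε ⊆ Kᶜ)
    {h : EuclideanSpace ℝ (Fin n) → V}
    (hcont : ∀ x : EuclideanSpace ℝ (Fin n), x ≠ 0 → ContinuousAt h x)
    (hz : ∀ x ∉ K, h x = 0) : Integrable h := by
  have hco : Continuous h := by
    rw [continuous_iff_continuousAt]
    intro x
    by_cases hx : x = 0
    · subst hx
      have hev : h =ᶠ[𝓝 (0 : EuclideanSpace ℝ (Fin n))] fun _ => 0 :=
        eventually_of_mem (ball_mem_nhds _ hε) fun y hy => hz y (hball hy)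
      exact continuousAt_const.congr hev.symm
    · exact hcont x hx
  exact hco.integrable_of_hasCompactSupport (HasCompactSupport.intro hKc hz)

/-- The Euclidean radial derivative `Rg(x) = (Dg(x))(x) / ‖x‖`. -/
noncomputable def radDeriv {n : ℕ} (g : EuclideanSpace ℝ (Fin n) → ℂ)
    (x : EuclideanSpace ℝ (Fin n)) : ℂ :=
  fderiv ℝ g x x / (‖x‖ : ℂ)

theorem stmt18 {n : ℕ} (hn : 3 ≤ n) (α : ℝ) (f : EuclideanSpace ℝ (Fin n) → ℂ)
    (hf : ContDiff ℝ (⊤ : ℕ∞) f) (hsupp : HasCompactSupport f)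
    (h0 : (0 : EuclideanSpace ℝ (Fin n)) ∉ tsupport f) :
    2 * α *
        (∫ x : EuclideanSpace ℝ (Fin n),
          radDeriv (fun y => f y / ((‖y‖ ^ α : ℝ) : ℂ)) x *
            (starRingEnd ℂ) (f x) / ((‖x‖ ^ (α + 1) : ℝ) : ℂ)).re
      = -(α * ((n : ℝ) - 2)) *
          ∫ x : EuclideanSpace ℝ (Fin n), ‖f x‖ ^ 2 / ‖x‖ ^ (2 * (α + 1)) := by
  classical
  have hfd : Differentiable ℝ f := hf.differentiable (by simp)
  set K : Set (EuclideanSpace ℝ (Fin n)) := tsupport f with hKdef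
  have hKc : IsCompact K := hsupp
  have hKopen : IsOpen Kᶜ := (isClosed_tsupport f).isOpen_compl
  obtain ⟨ε, hε, hball⟩ : ∃ ε > 0, Metric.ball (0 : EuclideanSpace ℝ (Fin n)) ε ⊆ Kᶜ :=
    Metric.isOpen_iff.1 hKopen 0 h0
  have hf0 : ∀ x ∉ K, f x = 0 := fun x hx => image_eq_zero_of_notMem_tsupport hx
  haveI : Nontrivial (EuclideanSpace ℝ (Fin n)) := by
    refine nontrivial_of_ne (EuclideanSpace.single ⟨0, by omega⟩ (1:ℝ)) 0 fun h => ?_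
    have := congrArg (fun v : EuclideanSpace ℝ (Fin n) => ‖v‖) h
    simp [EuclideanSpace.norm_single] at this
  have hae : ∀ᵐ x : EuclideanSpace ℝ (Fin n), x ≠ 0 := by
    rw [ae_iff]
    have : {x : EuclideanSpace ℝ (Fin n) | ¬ x ≠ 0} = {0} := by ext; simp
    rw [this]
    exact measure_singleton 0
  -- the basic real functions
  set u : EuclideanSpace ℝ (Fin n) → ℝ := fun x => ‖f x‖ ^ 2 with hu
  set β : ℝ := 2 * α + 2 with hβ
  set w : EuclideanSpace ℝ (Fin n) → ℝ := fun x => ‖x‖ ^ (-β) with hwdef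
  have hu_cd : ContDiff ℝ (⊤ : ℕ∞) u := hf.norm_sq ℂ
  have hu_d : Differentiable ℝ u := hu_cd.differentiable (by simp)
  have hu0 : ∀ x ∉ K, u x = 0 := fun x hx => by simp [hu, hf0 x hx]
  have hmem : ∀ x ∉ K, Kᶜ ∈ 𝓝 x := fun x hx => hKopen.mem_nhds hx
  have hfu0 : ∀ x ∉ K, fderiv ℝ u x = 0 := by
    intro x hx
    have hev : u =ᶠ[𝓝 x] fun _ => 0 := eventually_of_mem (hmem x hx) fun y hy => hu0 y hy
    rw [hev.fderiv_eq]
    exact fderiv_const_apply 0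
  have hw_cdAt : ∀ {x : EuclideanSpace ℝ (Fin n)}, x ≠ 0 → ContDiffAt ℝ (⊤ : ℕ∞) w x := by
    intro x hx
    exact (Real.contDiffAt_rpow_const_of_ne (p := -β) (norm_ne_zero_iff.2 hx)).comp x
      (contDiffAt_norm ℝ hx)
  have hw_deriv : ∀ {x : EuclideanSpace ℝ (Fin n)}, x ≠ 0 →
      HasFDerivAt w ((-β * ‖x‖ ^ (-β - 2)) • innerSL ℝ x) x :=
    fun {x} hx => aux_hasFDerivAt_norm_rpow hx (-β)
  have hnormpos : ∀ {x : EuclideanSpace ℝ (Fin n)}, x ≠ 0 → (0:ℝ) < ‖x‖ := fun {x} hx => norm_pos_iff.2 hx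
  have hwx : ∀ {x : EuclideanSpace ℝ (Fin n)}, x ≠ 0 → fderiv ℝ w x x = -β * w x := by
    intro x hx
    rw [(hw_deriv hx).fderiv]
    have h2 : ‖x‖ ^ (-β - 2) * ‖x‖ ^ (2:ℝ) = ‖x‖ ^ (-β) := by
      rw [← Real.rpow_add (hnormpos hx)]; norm_num
    have hin : (innerSL ℝ x) x = ‖x‖ ^ (2:ℝ) := by
      rw [innerSL_apply_apply, real_inner_self_eq_norm_sq, ← Real.rpow_natCast ‖x‖ 2]
      norm_num
    simp only [ContinuousLinearMap.coe_smul', Pi.smul_apply, smul_eq_mul, hin, hwdef]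
    rw [mul_assoc, h2]
  -- c and its smoothness
  set c : EuclideanSpace ℝ (Fin n) → ℝ := fun x => u x * w x with hc
  have hc0 : ∀ x ∉ K, c x = 0 := fun x hx => by simp [hc, hu0 x hx]
  have hc_cd : ContDiff ℝ (⊤ : ℕ∞) c := by
    rw [contDiff_iff_contDiffAt]
    intro x
    by_cases hx : x ∈ Metric.ball (0 : EuclideanSpace ℝ (Fin n)) ε
    · refine (contDiffAt_const (c := (0:ℝ))).congr_of_eventuallyEq ?_
      exact eventually_of_mem (Metric.isOpen_ball.mem_nhds hx)
        fun y hy => hc0 y (hball hy)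
    · have hx0 : x ≠ 0 := by
        intro h; subst h; exact hx (Metric.mem_ball_self hε)
      exact (hu_cd.contDiffAt).mul (hw_cdAt hx0)
  have hc_diff : Differentiable ℝ c := hc_cd.differentiable (by simp)
  have hc_fderiv_cont : Continuous fun x => fderiv ℝ c x := hc_cd.continuous_fderiv (by simp)
  have hcf0 : ∀ x ∉ K, fderiv ℝ c x = 0 := by
    intro x hx
    have hev : c =ᶠ[𝓝 x] fun _ => 0 := eventually_of_mem (hmem x hx) fun y hy => hc0 y hy
    rw [hev.fderiv_eq]
    exact fderiv_const_apply 0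
  have hc_cont : Continuous c := hc_cd.continuous
  have hIc : Integrable c := by
    refine aux_integrable hKc hε hball (fun x _ => hc_cont.continuousAt) hc0
  -- Step A1 : IBP in each coordinate
  have hproj_eq : ∀ i : Fin n, (fun y : EuclideanSpace ℝ (Fin n) => y i) = ⇑(EuclideanSpace.proj (𝕜 := ℝ) i) := by
    intro i; funext y; simp
  have hproj_d : ∀ i : Fin n, Differentiable ℝ (fun y : EuclideanSpace ℝ (Fin n) => y i) := fun i =>
    (EuclideanSpace.proj (𝕜 := ℝ) i).differentiable
  have hfderiv_proj : ∀ (i : Fin n) (x : EuclideanSpace ℝ (Fin n)),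
      fderiv ℝ (fun y : EuclideanSpace ℝ (Fin n) => y i) x (EuclideanSpace.single i 1) = 1 := by
    intro i x
    rw [hproj_eq i, ContinuousLinearMap.fderiv]
    simp
  have hint_ci : ∀ i : Fin n,
      Integrable (fun x : EuclideanSpace ℝ (Fin n) => fderiv ℝ c x (EuclideanSpace.single i 1) * x i) := by
    intro i
    refine aux_integrable hKc hε hball (fun x _ => ContinuousAt.mul ?_ ?_) ?_
    · exact (hc_fderiv_cont.clm_apply continuous_const).continuousAt
    · exact ((EuclideanSpace.proj (𝕜 := ℝ) i).continuous.continuousAt)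
    · intro x hx; rw [hcf0 x hx]; simp
  have stepA1 : ∀ i : Fin n,
      ∫ x : EuclideanSpace ℝ (Fin n), fderiv ℝ c x (EuclideanSpace.single i 1) * x i = - ∫ x : EuclideanSpace ℝ (Fin n), c x := by
    intro i
    have h := integral_mul_fderiv_eq_neg_fderiv_mul_of_integrable
      (μ := (volume : Measure (EuclideanSpace ℝ (Fin n)))) (f := c) (g := fun y : EuclideanSpace ℝ (Fin n) => y i)
      (v := EuclideanSpace.single i 1) ?_ ?_ ?_ (fun x _ => hc_diff x) (fun x _ => hproj_d i x)
    · simp only [hfderiv_proj i, mul_one] at h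
      linarith [h]
    · exact hint_ci i
    · simp only [hfderiv_proj i, mul_one]
      exact hIc
    · refine aux_integrable hKc hε hball
        (fun x _ => (hc_cont.continuousAt.mul
          ((EuclideanSpace.proj (𝕜 := ℝ) i).continuous.continuousAt))) ?_
      intro x hx; rw [hc0 x hx]; simp
  -- Step A2: sum over coordinates
  have hDcx_cont : Continuous fun x : EuclideanSpace ℝ (Fin n) => fderiv ℝ c x x :=
    hc_fderiv_cont.clm_apply continuous_id
  have stepA2 : ∫ x : EuclideanSpace ℝ (Fin n), fderiv ℝ c x x = -(n : ℝ) * ∫ x : EuclideanSpace ℝ (Fin n), c x := by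
    have h1 : (fun x : EuclideanSpace ℝ (Fin n) => fderiv ℝ c x x)
        = fun x : EuclideanSpace ℝ (Fin n) => ∑ i, fderiv ℝ c x (EuclideanSpace.single i 1) * x i := by
      funext x; rw [aux_clm_sum (fderiv ℝ c x) x]
    rw [h1, integral_finset_sum _ (fun i _ => hint_ci i)]
    simp only [stepA1]
    rw [Finset.sum_const, Finset.card_univ, Fintype.card_fin, nsmul_eq_mul]
    ring
  -- pointwise product rule for c
  have hIduw : Integrable (fun x : EuclideanSpace ℝ (Fin n) => fderiv ℝ u x x * w x) := by
    refine aux_integrable hKc hε hball (fun x hx => ContinuousAt.mul ?_ ?_) ?_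
    · exact ((hu_cd.continuous_fderiv (by simp)).clm_apply continuous_id).continuousAt
    · exact ((hw_cdAt hx).continuousAt)
    · intro x hx; rw [hfu0 x hx]; simp
  have stepA : ∫ x : EuclideanSpace ℝ (Fin n), fderiv ℝ u x x * w x = (β - (n:ℝ)) * ∫ x : EuclideanSpace ℝ (Fin n), c x := by
    have hcx : ∀ᵐ x : EuclideanSpace ℝ (Fin n), fderiv ℝ c x x = fderiv ℝ u x x * w x + (-β) * c x := by
      filter_upwards [hae] with x hx
      have hprod : fderiv ℝ c x = u x • fderiv ℝ w x + w x • fderiv ℝ u x := by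
        rw [hc]
        exact fderiv_mul (hu_d x) ((hw_deriv hx).differentiableAt)
      rw [hprod]
      simp only [ContinuousLinearMap.add_apply, ContinuousLinearMap.coe_smul', Pi.smul_apply,
        smul_eq_mul, hwx hx, hc]
      ring
    have h2 : ∫ x : EuclideanSpace ℝ (Fin n), fderiv ℝ c x x
        = ∫ x : EuclideanSpace ℝ (Fin n), (fderiv ℝ u x x * w x + (-β) * c x) := integral_congr_ae hcx
    rw [integral_add hIduw (hIc.const_mul (-β)), integral_const_mul] at h2
    rw [stepA2] at h2
    linarith [h2]
  -- Step C: derivative of u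
  have hDf_cont : Continuous fun x : EuclideanSpace ℝ (Fin n) => fderiv ℝ f x x :=
    (hf.continuous_fderiv (by simp)).clm_apply continuous_id
  have hRe : ∀ x : EuclideanSpace ℝ (Fin n), fderiv ℝ u x x
      = 2 * ((fderiv ℝ f x x) * (starRingEnd ℂ) (f x)).re := by
    intro x
    have hdf : HasFDerivAt f (fderiv ℝ f x) x := (hfd x).hasFDerivAt
    have hre : HasFDerivAt (fun y : EuclideanSpace ℝ (Fin n) => (f y).re)
        (Complex.reCLM.comp (fderiv ℝ f x)) x := Complex.reCLM.hasFDerivAt.comp x hdf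
    have him : HasFDerivAt (fun y : EuclideanSpace ℝ (Fin n) => (f y).im)
        (Complex.imCLM.comp (fderiv ℝ f x)) x := Complex.imCLM.hasFDerivAt.comp x hdf
    have hsq : HasFDerivAt
        (fun y : EuclideanSpace ℝ (Fin n) => ((f y).re) * ((f y).re) + ((f y).im) * ((f y).im))
        (((f x).re • (Complex.reCLM.comp (fderiv ℝ f x))
            + (f x).re • (Complex.reCLM.comp (fderiv ℝ f x)))
          + ((f x).im • (Complex.imCLM.comp (fderiv ℝ f x))
            + (f x).im • (Complex.imCLM.comp (fderiv ℝ f x)))) x :=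
      (hre.mul hre).add (him.mul him)
    have hueq : u = fun y : EuclideanSpace ℝ (Fin n) => ((f y).re) * ((f y).re) + ((f y).im) * ((f y).im) := by
      funext y
      rw [hu]
      simp only
      rw [Complex.sq_norm, Complex.normSq_apply]
    rw [hueq, hsq.fderiv]
    simp only [ContinuousLinearMap.add_apply, ContinuousLinearMap.coe_smul', Pi.smul_apply,
      ContinuousLinearMap.coe_comp', Function.comp_apply, Complex.reCLM_apply,
      Complex.imCLM_apply, smul_eq_mul, Complex.mul_re, Complex.conj_re, Complex.conj_im]
    push_cast
    ring
  -- LHS integrand rewriting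
  have hAeq : ∀ᵐ x : EuclideanSpace ℝ (Fin n),
      radDeriv (fun y => f y / ((‖y‖ ^ α : ℝ) : ℂ)) x * (starRingEnd ℂ) (f x)
          / ((‖x‖ ^ (α + 1) : ℝ) : ℂ)
        = (fderiv ℝ f x x) * (starRingEnd ℂ) (f x) * ((w x : ℝ) : ℂ)
          - (α : ℂ) * ((c x : ℝ) : ℂ) := by
    filter_upwards [hae] with x hx
    have hr : (0:ℝ) < ‖x‖ := hnormpos hx
    have hwα : HasFDerivAt (fun y : EuclideanSpace ℝ (Fin n) => ‖y‖ ^ (-α)) ((-α * ‖x‖ ^ (-α - 2)) • innerSL ℝ x) x :=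
      aux_hasFDerivAt_norm_rpow hx (-α)
    have h1 : HasFDerivAt (fun y : EuclideanSpace ℝ (Fin n) => ((‖y‖ ^ (-α) : ℝ) : ℂ))
        (Complex.ofRealCLM.comp ((-α * ‖x‖ ^ (-α - 2)) • innerSL ℝ x)) x :=
      Complex.ofRealCLM.hasFDerivAt.comp x hwα
    have hg : HasFDerivAt (fun y : EuclideanSpace ℝ (Fin n) => f y * ((‖y‖ ^ (-α) : ℝ) : ℂ))
        (f x • (Complex.ofRealCLM.comp ((-α * ‖x‖ ^ (-α - 2)) • innerSL ℝ x))
          + ((‖x‖ ^ (-α) : ℝ) : ℂ) • fderiv ℝ f x) x := (hfd x).hasFDerivAt.mul h1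
    have hgg : (fun y : EuclideanSpace ℝ (Fin n) => f y / ((‖y‖ ^ α : ℝ) : ℂ))
        =ᶠ[𝓝 x] fun y : EuclideanSpace ℝ (Fin n) => f y * ((‖y‖ ^ (-α) : ℝ) : ℂ) := by
      refine eventually_of_mem (isOpen_compl_singleton.mem_nhds hx) fun y hy => ?_
      have hy0 : y ≠ 0 := hy
      show f y / ((‖y‖ ^ α : ℝ) : ℂ) = f y * ((‖y‖ ^ (-α) : ℝ) : ℂ)
      rw [Real.rpow_neg (norm_nonneg y)]
      push_cast
      rw [div_eq_mul_inv]
    have hgd : fderiv ℝ (fun y : EuclideanSpace ℝ (Fin n) => f y / ((‖y‖ ^ α : ℝ) : ℂ)) x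
        = f x • (Complex.ofRealCLM.comp ((-α * ‖x‖ ^ (-α - 2)) • innerSL ℝ x))
          + ((‖x‖ ^ (-α) : ℝ) : ℂ) • fderiv ℝ f x := by
      rw [hgg.fderiv_eq, hg.fderiv]
    have hin : (innerSL ℝ x) x = ‖x‖ ^ (2:ℝ) := by
      rw [innerSL_apply_apply, real_inner_self_eq_norm_sq, ← Real.rpow_natCast ‖x‖ 2]
      norm_num
    have h2 : ‖x‖ ^ (-α - 2) * ‖x‖ ^ (2:ℝ) = ‖x‖ ^ (-α) := by
      rw [← Real.rpow_add hr]; norm_num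
    have hval : fderiv ℝ (fun y : EuclideanSpace ℝ (Fin n) => f y / ((‖y‖ ^ α : ℝ) : ℂ)) x x
        = f x * ((-α * ‖x‖ ^ (-α) : ℝ) : ℂ) + ((‖x‖ ^ (-α) : ℝ) : ℂ) * fderiv ℝ f x x := by
      rw [hgd]
      simp only [ContinuousLinearMap.add_apply, ContinuousLinearMap.coe_smul', Pi.smul_apply,
        ContinuousLinearMap.coe_comp', Function.comp_apply, Complex.ofRealCLM_apply,
        smul_eq_mul, hin]
      rw [mul_assoc, h2]
    -- the key rpow identity
    have hkey : (‖x‖ ^ (-α) : ℝ) = w x * (‖x‖ * ‖x‖ ^ (α + 1)) := by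
      rw [hwdef]
      simp only
      rw [show ‖x‖ * ‖x‖ ^ (α+1) = ‖x‖ ^ ((1:ℝ)) * ‖x‖ ^ (α+1) by rw [Real.rpow_one],
        ← Real.rpow_add hr, ← Real.rpow_add hr, hβ]
      norm_num
      ring_nf
    have huc : ((u x : ℝ) : ℂ) = f x * (starRingEnd ℂ) (f x) := by
      rw [Complex.mul_conj]
      norm_cast
      rw [hu]
      simp only
      rw [Complex.sq_norm]
    have hx1 : ((‖x‖ : ℝ) : ℂ) ≠ 0 := by
      simpa using hr.ne'
    have hx2 : ((‖x‖ ^ (α+1) : ℝ) : ℂ) ≠ 0 := by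
      simpa using (Real.rpow_pos_of_pos hr (α+1)).ne'
    rw [radDeriv, hval, hc]
    push_cast [hkey, huc]
    field_simp
    ring
  -- integrability of the complex integrand pieces
  have hIm1 : Integrable (fun x : EuclideanSpace ℝ (Fin n) => ((fderiv ℝ f x x) * (starRingEnd ℂ) (f x)).re * w x) := by
    refine aux_integrable hKc hε hball (fun x hx => ContinuousAt.mul ?_ ?_) ?_
    · exact (Complex.continuous_re.comp
        (hDf_cont.mul (Complex.continuous_conj.comp hf.continuous))).continuousAt
    · exact (hw_cdAt hx).continuousAt
    · intro x hx; simp [hf0 x hx]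
  have hIA2 : Integrable (fun x : EuclideanSpace ℝ (Fin n) =>
      (fderiv ℝ f x x) * (starRingEnd ℂ) (f x) * ((w x : ℝ) : ℂ) - (α : ℂ) * ((c x : ℝ) : ℂ)) := by
    refine aux_integrable hKc hε hball (fun x hx => ContinuousAt.sub (ContinuousAt.mul ?_ ?_)
      (ContinuousAt.mul continuousAt_const ?_)) ?_
    · exact (hDf_cont.mul (Complex.continuous_conj.comp hf.continuous)).continuousAt
    · exact (Complex.continuous_ofReal.continuousAt.comp (hw_cdAt hx).continuousAt)
    · exact (Complex.continuous_ofReal.continuousAt.comp hc_cont.continuousAt)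
    · intro x hx; simp [hf0 x hx, hc0 x hx]
  -- put everything together
  have hre_pt : ∀ x : EuclideanSpace ℝ (Fin n),
      ((fderiv ℝ f x x) * (starRingEnd ℂ) (f x) * ((w x : ℝ) : ℂ)
        - (α : ℂ) * ((c x : ℝ) : ℂ)).re
      = ((fderiv ℝ f x x) * (starRingEnd ℂ) (f x)).re * w x - α * c x := by
    intro x
    simp [Complex.sub_re, Complex.mul_re]
  have hmain : (∫ x : EuclideanSpace ℝ (Fin n),
      radDeriv (fun y => f y / ((‖y‖ ^ α : ℝ) : ℂ)) x * (starRingEnd ℂ) (f x)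
        / ((‖x‖ ^ (α + 1) : ℝ) : ℂ)).re
      = ((β - (n:ℝ))/2 - α) * ∫ x : EuclideanSpace ℝ (Fin n), c x := by
    rw [integral_congr_ae hAeq]
    have h3 := integral_re (𝕜 := ℂ) hIA2
    simp only [RCLike.re_to_complex] at h3
    rw [← h3]
    have h4 : (fun x : EuclideanSpace ℝ (Fin n) =>
        ((fderiv ℝ f x x) * (starRingEnd ℂ) (f x) * ((w x : ℝ) : ℂ)
          - (α : ℂ) * ((c x : ℝ) : ℂ)).re)
        = fun x : EuclideanSpace ℝ (Fin n) => ((fderiv ℝ f x x) * (starRingEnd ℂ) (f x)).re * w x - α * c x := by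
      funext x; exact hre_pt x
    rw [h4, integral_sub hIm1 (hIc.const_mul α), integral_const_mul]
    have h5 : (fun x : EuclideanSpace ℝ (Fin n) => ((fderiv ℝ f x x) * (starRingEnd ℂ) (f x)).re * w x)
        = fun x : EuclideanSpace ℝ (Fin n) => (1/2) * (fderiv ℝ u x x * w x) := by
      funext x; rw [hRe x]; ring
    rw [h5, integral_const_mul, stepA]
    ring
  rw [hmain]
  have hRHS : ∫ x : EuclideanSpace ℝ (Fin n), ‖f x‖ ^ 2 / ‖x‖ ^ (2 * (α + 1)) = ∫ x : EuclideanSpace ℝ (Fin n), c x := by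
    refine integral_congr_ae ?_
    filter_upwards [hae] with x hx
    have hr : (0:ℝ) < ‖x‖ := hnormpos hx
    rw [hc, hu, hwdef]
    simp only
    rw [Real.rpow_neg (norm_nonneg x), hβ]
    rw [show (2:ℝ) * (α + 1) = 2*α + 2 by ring]
    rw [div_eq_mul_inv]
  rw [hRHS, hβ]
  ring
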